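/- If a single edge is deleted from a graph G, then for every node v ∈ V(G), the core number of v decreases by at most 1; that is, core(v, G \ {(u,w)}) ≥ core(v, G) − 1. -/
import Mathlib


variable {V : Type*} [Fintype V]

/-- The k-core of `G`, as the set of vertices contained in some subgraph
(vertex set) in which every vertex has at least `k` neighbors inside the set. -/
def coreSet (G : SimpleGraph V) (k : ℕ) : Set V :=
  {v | ∃ S : Set V, v ∈ S ∧ ∀ u ∈ S, k ≤ (S ∩ G.neighborSet u).ncard}

/-- The core number of `v`: the largest `k` such that `v` belongs to the `k`-core. -/
noncomputable def coreNumber (G : SimpleGraph V) (v : V) : ℕ :=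
  sSup {k | v ∈ coreSet G k}

lemma coreBdd (G : SimpleGraph V) (v : V) :
    BddAbove {k | v ∈ coreSet G k} := by
  refine ⟨Fintype.card V, ?_⟩
  rintro k ⟨S, hvS, hS⟩
  calc k ≤ (S ∩ G.neighborSet v).ncard := hS v hvS
    _ ≤ (Set.univ : Set V).ncard := Set.ncard_le_ncard (Set.subset_univ _) (Set.toFinite _)
    _ = Fintype.card V := by simp [Set.ncard_univ]

theorem stmt4 (G : SimpleGraph V) (u w : V) (hadj : G.Adj u w) :
    ∀ v : V, coreNumber G v ≤ coreNumber (G.deleteEdges {s(u, w)}) v + 1 := by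
  intro v
  set G' := G.deleteEdges {s(u, w)} with hG'
  have hne : {k | v ∈ coreSet G k}.Nonempty := by
    refine ⟨0, ⟨{v}, rfl, ?_⟩⟩
    intro x _; exact Nat.zero_le _
  have hmem : v ∈ coreSet G (coreNumber G v) :=
    Nat.sSup_mem hne (coreBdd G v)
  obtain ⟨S, hvS, hS⟩ := hmem
  set k := coreNumber G v with hk
  -- S is a witness that v is in the (k-1)-core of G'
  have hstep : ∀ x ∈ S, k - 1 ≤ (S ∩ G'.neighborSet x).ncard := by
    intro x hx
    classical
    set z := if x = u then w else u with hz
    have hsub : (S ∩ G.neighborSet x) \ {z} ⊆ S ∩ G'.neighborSet x := by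
      rintro y ⟨⟨hyS, hyN⟩, hyz⟩
      refine ⟨hyS, ?_⟩
      simp only [Set.mem_singleton_iff] at hyz
      simp only [SimpleGraph.mem_neighborSet, hG', SimpleGraph.deleteEdges_adj,
        Set.mem_singleton_iff] at hyN ⊢
      refine ⟨hyN, ?_⟩
      intro heq
      rw [Sym2.eq_iff] at heq
      rcases heq with ⟨hxu, hyw⟩ | ⟨hxw, hyu⟩
      · apply hyz; rw [hz, if_pos hxu, hyw]
      · by_cases hxu : x = u
        · exact hadj.ne (hxu.symm.trans hxw)
        · apply hyz; rw [hz, if_neg hxu, hyu]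
    have h1 : (S ∩ G.neighborSet x).ncard ≤ ((S ∩ G.neighborSet x) \ {z}).ncard + 1 := by
      have : (S ∩ G.neighborSet x) ⊆ ((S ∩ G.neighborSet x) \ {z}) ∪ {z} := by
        intro y hy
        by_cases h : y = z
        · exact Or.inr h
        · exact Or.inl ⟨hy, h⟩
      calc (S ∩ G.neighborSet x).ncard
          ≤ (((S ∩ G.neighborSet x) \ {z}) ∪ {z}).ncard :=
            Set.ncard_le_ncard this (Set.toFinite _)
        _ ≤ ((S ∩ G.neighborSet x) \ {z}).ncard + ({z} : Set V).ncard :=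
            Set.ncard_union_le _ _
        _ = ((S ∩ G.neighborSet x) \ {z}).ncard + 1 := by simp
    have h2 : ((S ∩ G.neighborSet x) \ {z}).ncard ≤ (S ∩ G'.neighborSet x).ncard :=
      Set.ncard_le_ncard hsub (Set.toFinite _)
    have h0 := hS x hx
    omega
  have hstep' : k - 1 ≤ (S ∩ G.neighborSet v).ncard := le_trans (Nat.sub_le _ _) (hS v hvS)
  have hmem' : (k - 1) ∈ {m | v ∈ coreSet G' m} := by
    refine ⟨S, hvS, ?_⟩
    intro x hx
    have := hstep x hx
    exact this
  have : k - 1 ≤ coreNumber G' v := le_csSup (coreBdd G' v) hmem'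
  omega
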